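/- arXiv:2107.13584 — 3 statements merged into one kernel-verified Lean document; each statement's English description precedes it below -/
import Mathlib

section
/- Let n and d be real numbers with d ≤ n and d > (2-√2)·n + 3, and let h, k, q be real numbers with h ≥ 1, k < 0, and q > 0. Then (2(n+1-d)(n+2-d) + n + 1 - d^2)·h + (3n - 3d + 5)·k - 2q + 24 < 0. -/
/-!
Let `A(n, d)` be the coefficient of `H²` in the key inequality. As a quadratic in `d` it has the
roots `(2 ∓ √2) n + 3` up to the shift `-(5n + 4)`, so for `d` strictly between them, which is
what `(2 - √2) n + 3 < d ≤ n` forces, `A(n, d) ≤ -(5n + 4)`. These bounds on `d` also force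
`n > 4`, whence `A(n, d) < -24`. Since `h ≥ 1`, `k < 0`, `q > 0` and `3(n - d) + 5 > 0`, every other
term only makes the left-hand side smaller.
-/

open Real

/-- The coefficient of `H²` in the key inequality (1). -/
def keyCoeff (n d : ℝ) : ℝ := 2 * (n + 1 - d) * (n + 2 - d) + n + 1 - d ^ 2

lemma keyCoeff_eq (n d : ℝ) :
    keyCoeff n d = (d - ((2 - √2) * n + 3)) * (d - ((2 + √2) * n + 3)) - (5 * n + 4) := by
  have hsqrt : √2 ^ 2 = 2 := sq_sqrt zero_le_two
  unfold keyCoeff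
  linear_combination n ^ 2 * hsqrt

section

variable {n d : ℝ}

lemma four_lt_of_le_of_lt (hdn : d ≤ n) (hd : (2 - √2) * n + 3 < d) : 4 < n := by
  have hsqrt : √2 < 7 / 4 := by
    rw [sqrt_lt' (by norm_num)]
    norm_num
  have hgap : 3 < (√2 - 1) * n := by linarith
  have hn : 0 < n := pos_of_mul_pos_right (three_pos.trans hgap) (by linarith [one_lt_sqrt_two])
  nlinarith [mul_lt_mul_of_pos_right hsqrt hn]

lemma keyCoeff_lt_neg_24 (hdn : d ≤ n) (hd : (2 - √2) * n + 3 < d) : keyCoeff n d < -24 := by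
  have hn := four_lt_of_le_of_lt hdn hd
  have hupper : d < (2 + √2) * n + 3 := by nlinarith [sqrt_nonneg 2]
  have hprod : (d - ((2 - √2) * n + 3)) * (d - ((2 + √2) * n + 3)) ≤ 0 :=
    mul_nonpos_of_nonneg_of_nonpos (by linarith) (by linarith)
  rw [keyCoeff_eq]
  linarith

end

/-- Numerical core of the del Pezzo corollary: with `h = H² ≥ 1`, `k = H·K < 0`,
`q = K² > 0`, the key inequality (1) fails when `d ≤ n` and `d > (2-√2)n + 3`. -/
theorem stmt_2 (n d h k q : ℝ) (hdn : d ≤ n) (hd : d > (2 - Real.sqrt 2) * n + 3)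
    (hh : h ≥ 1) (hk : k < 0) (hq : q > 0) :
    (2 * (n + 1 - d) * (n + 2 - d) + n + 1 - d ^ 2) * h
      + (3 * n - 3 * d + 5) * k - 2 * q + 24 < 0 := by
  have hA : keyCoeff n d < -24 := keyCoeff_lt_neg_24 hdn hd
  have hAh : keyCoeff n d * h ≤ keyCoeff n d := by
    simpa using mul_le_mul_of_nonpos_left hh (by linarith : keyCoeff n d ≤ 0)
  have hK : (3 * n - 3 * d + 5) * k < 0 := mul_neg_of_pos_of_neg (by linarith) hk
  show keyCoeff n d * h + (3 * n - 3 * d + 5) * k - 2 * q + 24 < 0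
  linarith
end

section
/- Let n and d be real numbers with d ≤ n and d > (2-√2)·n + 4, and set B := 2(n+1-d)(n+2-d) + n + 1 - d^2 + (3n-3d+5) + 16. Then B < -(3n-3d+5) - 20. -/
/-!
Writing `B` for the left-hand side, the claim is equivalent to `(2n - d + 6)² < 2n² + 11n - 15`.
The hypotheses give `0 < 2n - d + 6 < √2 n + 2`, and `(√2 n + 2)² = 2n² + 4√2 n + 4` is at most
`2n² + 11n - 15` as soon as `n ≥ 4`, which holds because `(√2 - 1) n > 4`.
-/

open Real

lemma coeff_gap_eq (n d : ℝ) :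
    (-(3 * n - 3 * d + 5) - 20)
        - (2 * (n + 1 - d) * (n + 2 - d) + n + 1 - d ^ 2 + (3 * n - 3 * d + 5) + 16)
      = 2 * n ^ 2 + 11 * n - 15 - (2 * n - d + 6) ^ 2 := by
  ring

lemma four_lt_of_sqrt_two_bound {n d : ℝ} (hdn : d ≤ n) (hd : d > (2 - √2) * n + 4) :
    4 < n := by
  have hgap : 4 < (√2 - 1) * n := by linarith
  have hn : 0 < n :=
    pos_of_mul_pos_right (by linarith : 0 < (√2 - 1) * n) (by linarith [one_lt_sqrt_two])
  nlinarith [sqrt_two_lt_three_halves]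

/-- Main estimate in the Harbourne–Hirschowitz corollary: if `d ≤ n` and
`d > (2-√2)n + 4`, then the modified coefficient `B` of `H²` satisfies
`B < -(3n-3d+5) - 20`. -/
theorem stmt_3 (n d : ℝ) (hdn : d ≤ n) (hd : d > (2 - Real.sqrt 2) * n + 4) :
    2 * (n + 1 - d) * (n + 2 - d) + n + 1 - d ^ 2 + (3 * n - 3 * d + 5) + 16
      < -(3 * n - 3 * d + 5) - 20 := by
  have hn : 4 < n := four_lt_of_sqrt_two_bound hdn hd
  have hsq : (2 * n - d + 6) ^ 2 < (√2 * n + 2) ^ 2 :=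
    pow_lt_pow_left₀ (by linarith) (by linarith) two_ne_zero
  have hexpand : (√2 * n + 2) ^ 2 = 2 * n ^ 2 + 4 * √2 * n + 4 := by
    rw [add_sq, mul_pow, sq_sqrt zero_le_two]
    ring
  have hlin : 4 * √2 * n + 4 ≤ 11 * n - 15 := by
    nlinarith [sqrt_two_lt_three_halves]
  linarith [coeff_gap_eq n d]
end

section
/- Let 𝕜 be an algebraically closed field, let n ≥ 2, and let F be a homogeneous polynomial of degree d in the n+1 variables x_0,…,x_n over 𝕜 with 1 ≤ d ≤ n - 1. Then for every nonzero point p ∈ 𝕜^{n+1} with F(p) = 0, there exists v ∈ 𝕜^{n+1} that is not a scalar multiple of p such that F(s·p + t·v) = 0 for all s, t ∈ 𝕜. In other words, every point of a degree-d hypersurface in ℙⁿ with d ≤ n-1 lies on a line contained in the hypersurface. -/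
/-!
Expand `F` around `p`: `F(p + x) = F₁(x) + ⋯ + F_d(x)` with `F_k` homogeneous of degree `k`, the
constant term being `F(p) = 0`. Pick `j` with `p_j ≠ 0`. The `d + 1` forms `x_j, F₁, …, F_d` vanish
at `0`, and `0` cannot be their only common zero: by the Nullstellensatz the ideal of a point, of
height `n + 1`, would then be minimal over an ideal with `d + 1 < n + 1` generators, against Krull's
height theorem. A common zero `u ≠ 0` gives `F(p + t u) = ∑ tᵏ F_k(u) = 0` for all `t`; homogeneity
gives `F(s p + t u) = 0` for `s ≠ 0`, hence for all `s`, and `u_j = 0` keeps `u` off the line `𝕜 p`.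
-/

namespace MvPolynomial

section CommSemiring

variable {R σ : Type*} [CommSemiring R]

theorem eval_aeval_X_add_C (φ : MvPolynomial σ R) (x c : σ → R) :
    eval x (aeval (fun j => X j + C (c j)) φ) = eval (x + c) φ := by
  rw [aeval_eq_bind₁, eval, eval₂Hom_bind₁, eval]
  congr 2
  funext j
  simp

theorem IsHomogeneous.eval_smul {φ : MvPolynomial σ R} {n : ℕ} (hφ : φ.IsHomogeneous n)
    (c : R) (x : σ → R) : eval (c • x) φ = c ^ n * eval x φ := by
  rw [eval_eq, eval_eq, Finset.mul_sum]
  refine Finset.sum_congr rfl fun u hu => ?_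
  have hdeg : u.degree = n := by
    rw [Finsupp.degree_eq_weight_one]
    exact hφ (mem_support_iff.mp hu)
  rw [Finsupp.degree_apply] at hdeg
  simp only [Pi.smul_apply, smul_eq_mul, mul_pow, Finset.prod_mul_distrib,
    Finset.prod_pow_eq_pow_sum, hdeg]
  ring

theorem eval_smul_eq_zero_of_forall_eval_homogeneousComponent_eq_zero {φ : MvPolynomial σ R}
    {x : σ → R} (h : ∀ k, eval x (homogeneousComponent k φ) = 0) (t : R) :
    eval (t • x) φ = 0 := by
  rw [← sum_homogeneousComponent φ, map_sum]
  exact Finset.sum_eq_zero fun k _ => by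
    rw [(homogeneousComponent_isHomogeneous k φ).eval_smul, h, mul_zero]

theorem totalDegree_aeval_le {τ : Type*} {f : σ → MvPolynomial τ R}
    (hf : ∀ i, (f i).totalDegree ≤ 1) (φ : MvPolynomial σ R) :
    (aeval f φ).totalDegree ≤ φ.totalDegree := by
  conv_lhs => rw [φ.as_sum, map_sum]
  refine (totalDegree_finsetSum _ _).trans (Finset.sup_le fun u hu => ?_)
  rw [aeval_monomial, algebraMap_eq]
  refine (totalDegree_mul _ _).trans ?_
  rw [totalDegree_C, zero_add]
  refine (totalDegree_finsetProd _ _).trans ?_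
  calc ∑ i ∈ u.support, (f i ^ u i).totalDegree
      ≤ ∑ i ∈ u.support, u i := Finset.sum_le_sum fun i _ =>
        (totalDegree_pow _ _).trans (by simpa using Nat.mul_le_mul_left (u i) (hf i))
    _ ≤ φ.totalDegree := le_totalDegree hu

end CommSemiring

theorem eval_smul_add_eq_zero_of_forall_ne_zero {R σ : Type*} [CommRing R] [IsDomain R]
    [Infinite R] (φ : MvPolynomial σ R) (x y : σ → R)
    (h : ∀ s : R, s ≠ 0 → eval (s • x + y) φ = 0) (s : R) : eval (s • x + y) φ = 0 := by
  set q : Polynomial R := aeval (fun i => Polynomial.C (x i) * Polynomial.X + Polynomial.C (y i)) φ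
  have hq : ∀ s, q.eval s = eval (s • x + y) φ := fun s => by
    rw [← Polynomial.coe_aeval_eq_eval, comp_aeval_apply, ← aeval_eq_eval]
    congr 2
    funext i
    simpa using mul_comm (x i) s
  have hq0 : q = 0 := Polynomial.eq_zero_of_infinite_isRoot q <|
    (Set.finite_singleton 0).infinite_compl.mono fun s hs => by simpa [hq] using h s hs
  rw [← hq, hq0, Polynomial.eval_zero]

section IsAlgClosed

variable {k σ : Type*} [Field k] [IsAlgClosed k] [Fintype σ]

theorem exists_height_vanishingIdeal_singleton_eq_card :
    ∃ b : σ → k, (vanishingIdeal k {b} : Ideal (MvPolynomial σ k)).height = Fintype.card σ := by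
  have hdim : ringKrullDim (MvPolynomial σ k) = Fintype.card σ := by
    simp [ringKrullDim_of_isNoetherianRing]
  have : FiniteRingKrullDim (MvPolynomial σ k) :=
    finiteRingKrullDim_iff_ne_bot_and_top.mpr (by rw [hdim]; exact ⟨nofun, nofun⟩)
  obtain ⟨m, hm, hheight⟩ := Ideal.exists_isMaximal_height (R := MvPolynomial σ k)
  obtain ⟨b, rfl⟩ := isMaximal_iff_eq_vanishingIdeal_singleton.mp hm
  exact ⟨b, by exact_mod_cast hheight.trans hdim⟩

theorem exists_ne_forall_eval_eq_zero_of_card_lt {ι : Type*} [Fintype ι]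
    (G : ι → MvPolynomial σ k) (hcard : Fintype.card ι < Fintype.card σ) (a : σ → k)
    (ha : ∀ i, eval a (G i) = 0) : ∃ v ≠ a, ∀ i, eval v (G i) = 0 := by
  classical
  by_contra! honly
  obtain ⟨b, hb⟩ := exists_height_vanishingIdeal_singleton_eq_card (k := k) (σ := σ)
  -- The height of a point ideal is known only at `b`, so move `a` to `b`.
  set G' : ι → MvPolynomial σ k := fun i => aeval (fun j => X j + C ((a - b) j)) (G i)
  have hzero : zeroLocus k (Ideal.span (Finset.univ.image G' : Set (MvPolynomial σ k))) = {b} := by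
    ext x
    simp only [zeroLocus_span, Finset.coe_image, Finset.coe_univ, Set.image_univ,
      Set.forall_mem_range, Set.mem_ofPred_eq, Set.mem_singleton_iff, aeval_eq_eval, G',
      eval_aeval_X_add_C]
    refine ⟨fun hx => ?_, fun hx => by simpa [hx] using ha⟩
    by_contra hxb
    obtain ⟨i, hi⟩ := honly (x + (a - b))
      fun h => hxb ((eq_sub_of_add_eq h).trans (sub_sub_cancel a b))
    exact hi (hx i)
  have hmin : vanishingIdeal k {b} ∈
      (Ideal.span (Finset.univ.image G' : Set (MvPolynomial σ k))).minimalPrimes := by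
    rw [← Ideal.radical_minimalPrimes, ← vanishingIdeal_zeroLocus_eq_radical (K := k), hzero,
      Ideal.minimalPrimes_eq_subsingleton_self]
    rfl
  have hle := (Ideal.height_le_card_of_mem_minimalPrimes_span_finset hmin).trans
    (Nat.cast_le.mpr Finset.card_image_le)
  rw [hb, Finset.card_univ, Nat.cast_le] at hle
  omega

theorem exists_ne_zero_forall_eval_smul_add_eq_zero {F : MvPolynomial σ k} {d : ℕ}
    (hF : F.totalDegree ≤ d) {p : σ → k} (hFp : eval p F = 0) (j : σ)
    (hd : d + 1 < Fintype.card σ) :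
    ∃ u ≠ 0, u j = 0 ∧ ∀ t : k, eval (t • u + p) F = 0 := by
  -- `Fp x = F (x + p)`; its homogeneous components are the `F_k`.
  set Fp := aeval (fun i => X i + C (p i)) F
  have hFp_deg : Fp.totalDegree ≤ d := by
    refine (totalDegree_aeval_le (fun i => ?_) F).trans hF
    exact (totalDegree_add _ _).trans (by simp)
  let G : Option (Fin d) → MvPolynomial σ k :=
    fun o => o.elim (X j) fun i => homogeneousComponent (i + 1) Fp
  obtain ⟨u, hu0, hu⟩ := exists_ne_forall_eval_eq_zero_of_card_lt G
      (by rwa [Fintype.card_option, Fintype.card_fin]) 0 <| by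
    rintro (_ | i)
    · simp [G]
    · show eval 0 (homogeneousComponent (i + 1) Fp) = 0
      simpa using (homogeneousComponent_isHomogeneous (i + 1) Fp).eval_smul 0 0
  have hcomp : ∀ m, eval u (homogeneousComponent m Fp) = 0
    | 0 => by
      rw [homogeneousComponent_zero, eval_C, ← constantCoeff_eq, ← eval_zero, eval_aeval_X_add_C,
        zero_add, hFp]
    | m + 1 => by
      by_cases hm : m < d
      · exact hu (some ⟨m, hm⟩)
      · rw [homogeneousComponent_eq_zero _ _ (by omega), map_zero]
  refine ⟨u, hu0, by simpa [G] using hu none, fun t => ?_⟩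
  rw [← eval_aeval_X_add_C]
  exact eval_smul_eq_zero_of_forall_eval_homogeneousComponent_eq_zero hcomp t

end IsAlgClosed

end MvPolynomial

open MvPolynomial

theorem stmt_7_general {𝕜 : Type*} [Field 𝕜] [IsAlgClosed 𝕜] (n d : ℕ) (hn : 2 ≤ n)
    (hdn : d ≤ n - 1)
    (F : MvPolynomial (Fin (n + 1)) 𝕜) (hF : F.IsHomogeneous d)
    (p : Fin (n + 1) → 𝕜) (hp : p ≠ 0) (hFp : MvPolynomial.eval p F = 0) :
    ∃ v : Fin (n + 1) → 𝕜, (¬ ∃ c : 𝕜, v = c • p) ∧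
      ∀ s t : 𝕜, MvPolynomial.eval (s • p + t • v) F = 0 := by
  obtain ⟨j, hpj⟩ := Function.ne_iff.mp hp
  obtain ⟨u, hu0, huj, hline⟩ :=
    exists_ne_zero_forall_eval_smul_add_eq_zero hF.totalDegree_le hFp j
      (by rw [Fintype.card_fin]; omega)
  refine ⟨u, ?_, fun s t => ?_⟩
  · rintro ⟨c, rfl⟩
    have hc : c = 0 := (mul_eq_zero.mp huj).resolve_right hpj
    exact hu0 (by rw [hc, zero_smul])
  · refine eval_smul_add_eq_zero_of_forall_ne_zero F p (t • u) (fun s (hs : s ≠ 0) => ?_) s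
    have hscale : s • p + t • u = s • ((s⁻¹ * t) • u + p) := by
      rw [smul_add, smul_smul, mul_inv_cancel_left₀ hs]
      exact add_comm _ _
    rw [hscale, hF.eval_smul, hline, mul_zero]

/-- Every point of a degree-`d` hypersurface in ℙⁿ with `1 ≤ d ≤ n-1` (over an
algebraically closed field) lies on a line contained in the hypersurface:
for every nonzero `p` with `F(p) = 0`, there is `v` not a scalar multiple of `p`
with `F(s·p + t·v) = 0` for all `s, t`. -/
theorem stmt_7 {𝕜 : Type*} [Field 𝕜] [IsAlgClosed 𝕜] (n d : ℕ) (hn : 2 ≤ n)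
    (hd1 : 1 ≤ d) (hdn : d ≤ n - 1)
    (F : MvPolynomial (Fin (n + 1)) 𝕜) (hF : F.IsHomogeneous d)
    (p : Fin (n + 1) → 𝕜) (hp : p ≠ 0) (hFp : MvPolynomial.eval p F = 0) :
    ∃ v : Fin (n + 1) → 𝕜, (¬ ∃ c : 𝕜, v = c • p) ∧
      ∀ s t : 𝕜, MvPolynomial.eval (s • p + t • v) F = 0 :=
  stmt_7_general n d hn hdn F hF p hp hFp
end
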